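/- Let M : Fin u → Fin v → ℝ be a Monge matrix and let i be a natural number with i ≤ u. Then there exists a natural number s with s ≤ v such that: (1) every column j with j < s has a column minimum attained in some row r with i ≤ r < u; and (2) every column j with s ≤ j < v has a column minimum attained in some row r with r < i. In other words, the columns split into a prefix whose minima can be found among the bottom u − i rows and a suffix whose minima can be found among the top i rows. (The existence statement underlying Lemma 3 (l:split) of the paper.) -/

import Mathlib

/-- A rectangular Monge matrix. -/
def IsMonge {u v : ℕ} (M : Fin u → Fin v → ℝ) : Prop :=
  ∀ i1 i2 : Fin u, ∀ j1 j2 : Fin v, i1 ≤ i2 → j1 ≤ j2 →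
    M i2 j1 + M i1 j2 ≤ M i1 j1 + M i2 j2

/-- Row `r` attains the column minimum of column `c`. -/
def ColMinAt {u v : ℕ} (M : Fin u → Fin v → ℝ) (r : Fin u) (c : Fin v) : Prop :=
  ∀ i : Fin u, M r c ≤ M i c

/-! By the Monge inequality, if row `r₂` is a minimum of column `j₂` and some row `r₁ ≤ r₂` is a
minimum of an earlier column `j₁`, then `r₂` is a minimum of `j₁` as well. Hence the columns with a
minimum in the bottom rows form an initial segment `j < s`, and every later column, having no
minimum in the bottom rows, has one among the top rows. -/

lemma Fin.exists_mem_iff_val_lt_of_isLowerSet {v : ℕ} {S : Set (Fin v)} (hS : IsLowerSet S) :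
    ∃ s ≤ v, ∀ j : Fin v, j ∈ S ↔ (j : ℕ) < s := by
  classical
  have hbound : ∃ t, ∀ j ∈ S, (j : ℕ) < t := ⟨v, fun j _ => j.isLt⟩
  refine ⟨Nat.find hbound, Nat.find_min' hbound fun j _ => j.isLt,
    fun j => ⟨Nat.find_spec hbound j, fun hj => ?_⟩⟩
  by_contra hjS
  have hbelow : ∀ k ∈ S, (k : ℕ) < j := fun k hk =>
    lt_of_not_ge fun hjk => hjS (hS (Fin.le_iff_val_le_val.2 hjk) hk)
  exact (Nat.find_min' hbound hbelow).not_gt hj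

lemma exists_colMinAt {u v : ℕ} [NeZero u] (M : Fin u → Fin v → ℝ) (j : Fin v) :
    ∃ r, ColMinAt M r j :=
  Finite.exists_min fun r => M r j

namespace IsMonge

variable {u v : ℕ} {M : Fin u → Fin v → ℝ}

lemma colMinAt_of_le (hM : IsMonge M) {j1 j2 : Fin v} (hj : j1 ≤ j2) {r1 r2 : Fin u}
    (hr : r1 ≤ r2) (h1 : ColMinAt M r1 j1) (h2 : ColMinAt M r2 j2) : ColMinAt M r2 j1 := by
  intro k
  have hexchange := hM r1 r2 j1 j2 hr hj
  have hmin2 := h2 r1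
  have : M r2 j1 ≤ M r1 j1 := by linarith
  exact this.trans (h1 k)

lemma isLowerSet_setOf_exists_colMinAt_ge (hM : IsMonge M) (i : ℕ) :
    IsLowerSet {j | ∃ r : Fin u, i ≤ (r : ℕ) ∧ ColMinAt M r j} := by
  rintro j2 j1 hj ⟨r2, hir2, h2⟩
  have : NeZero u := ⟨Fin.pos r2 |>.ne'⟩
  obtain ⟨r1, h1⟩ := exists_colMinAt M j1
  rcases le_or_gt r1 r2 with hr | hr
  · exact ⟨r2, hir2, hM.colMinAt_of_le hj hr h1 h2⟩
  · exact ⟨r1, hir2.trans (Fin.lt_def.1 hr).le, h1⟩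

end IsMonge

theorem monge_split_general {u v : ℕ} (hu : 0 < u) (M : Fin u → Fin v → ℝ)
    (hM : IsMonge M) (i : ℕ) :
    ∃ s : ℕ, s ≤ v ∧
      (∀ j : Fin v, (j : ℕ) < s → ∃ r : Fin u, i ≤ (r : ℕ) ∧ ColMinAt M r j) ∧
      (∀ j : Fin v, s ≤ (j : ℕ) → ∃ r : Fin u, (r : ℕ) < i ∧ ColMinAt M r j) := by
  have : NeZero u := ⟨hu.ne'⟩
  obtain ⟨s, hsv, hs⟩ :=
    Fin.exists_mem_iff_val_lt_of_isLowerSet (hM.isLowerSet_setOf_exists_colMinAt_ge i)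
  refine ⟨s, hsv, fun j hj => (hs j).2 hj, fun j hj => ?_⟩
  obtain ⟨r, hr⟩ := exists_colMinAt M j
  refine ⟨r, lt_of_not_ge fun hir => ?_, hr⟩
  exact ((hs j).1 ⟨r, hir, hr⟩).not_ge hj

/-- The existence statement underlying Lemma 3 (l:split): for any row
threshold `i ≤ u` there is a column threshold `s ≤ v` such that every column
before `s` has a column minimum among the bottom rows (indices `≥ i`) and
every column from `s` on has a column minimum among the top rows
(indices `< i`). -/
theorem monge_split {u v : ℕ} (hu : 0 < u) (M : Fin u → Fin v → ℝ)
    (hM : IsMonge M) (i : ℕ) (hi : i ≤ u) :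
    ∃ s : ℕ, s ≤ v ∧
      (∀ j : Fin v, (j : ℕ) < s → ∃ r : Fin u, i ≤ (r : ℕ) ∧ ColMinAt M r j) ∧
      (∀ j : Fin v, s ≤ (j : ℕ) → ∃ r : Fin u, (r : ℕ) < i ∧ ColMinAt M r j) :=
  monge_split_general hu M hM i
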